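/- arXiv:1902.00717 — 4 statements merged into one kernel-verified Lean document; each statement's English description precedes it below -/
import Mathlib

section
/- Theorem 1 (case λ < λ̄): If λ < λ̄, then the probability that the minimum-distance rule correctly de-anonymizes u from the pair {u′, v} satisfies P(X < Y) ≥ 1 − 2·exp(−(λ − λ̄)²/(4δ²)); equivalently, P(X ≥ Y) ≤ 2·exp(−(λ − λ̄)²/(4δ²)). -/
/-!
The success event fails exactly when `X - Y` exceeds its mean `λ - λ̄` by `λ̄ - λ > 0`.
No independence is needed: `X - Y` is itself bounded, in an interval of width
`θ + θ̄ ≤ 2δ`, so Hoeffding's lemma makes `X - Y - (λ - λ̄)` sub-Gaussian and the Chernoff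
bound gives `P(X ≥ Y) ≤ exp(-2(λ - λ̄)²/(θ + θ̄)²) ≤ exp(-(λ - λ̄)²/(2δ²))`, which is
stronger than the claimed bound.
-/

open MeasureTheory ProbabilityTheory Real Set

lemma measureReal_le_le_exp_of_mem_Icc {Ω : Type*} [MeasurableSpace Ω] {P : Measure Ω}
    [IsProbabilityMeasure P] {X Y : Ω → ℝ} {a b c d : ℝ}
    (hX : AEMeasurable X P) (hY : AEMeasurable Y P)
    (hXr : ∀ᵐ ω ∂P, X ω ∈ Icc a b) (hYr : ∀ᵐ ω ∂P, Y ω ∈ Icc c d) (hmean : P[X] ≤ P[Y]) :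
    P.real {ω | Y ω ≤ X ω} ≤ exp (-2 * (P[Y] - P[X]) ^ 2 / (b - a + (d - c)) ^ 2) := by
  have hXY : ∀ᵐ ω ∂P, (X - Y) ω ∈ Icc (a - d) (b - c) := by
    filter_upwards [hXr, hYr] with ω ⟨hXa, hXb⟩ ⟨hYc, hYd⟩
    exact ⟨by simp only [Pi.sub_apply]; linarith, by simp only [Pi.sub_apply]; linarith⟩
  have hsubG := hasSubgaussianMGF_of_mem_Icc (hX.sub hY) hXY
  have hint : P[X - Y] = P[X] - P[Y] :=
    integral_sub (Integrable.of_mem_Icc a b hX hXr) (Integrable.of_mem_Icc c d hY hYr)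
  calc P.real {ω | Y ω ≤ X ω}
      ≤ P.real {ω | P[Y] - P[X] ≤ (X - Y) ω - P[X - Y]} := by
        refine measureReal_mono fun ω (hω : Y ω ≤ X ω) ↦ ?_
        change P[Y] - P[X] ≤ X ω - Y ω - P[X - Y]
        linarith
    _ ≤ _ := hsubG.measure_ge_le (sub_nonneg.2 hmean)
    _ = _ := by
        congr 1
        push_cast
        rw [Real.norm_eq_abs, div_pow, sq_abs, show b - c - (a - d) = b - a + (d - c) by ring,
          show 2 * ((b - a + (d - c)) ^ 2 / 2 ^ 2) = (b - a + (d - c)) ^ 2 / 2 by ring,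
          div_div_eq_mul_div]
        ring

lemma exp_neg_two_mul_sq_div_sq_le {ε w δ : ℝ} (hw : 0 < w) (hwδ : w ≤ 2 * δ) :
    exp (-2 * ε ^ 2 / w ^ 2) ≤ 2 * exp (-ε ^ 2 / (4 * δ ^ 2)) := by
  have hsq : w ^ 2 ≤ 4 * δ ^ 2 := by nlinarith
  have hexponent : -2 * ε ^ 2 / w ^ 2 ≤ -ε ^ 2 / (4 * δ ^ 2) := by
    rw [neg_mul, neg_div, neg_div, neg_le_neg_iff]
    calc ε ^ 2 / (4 * δ ^ 2) ≤ ε ^ 2 / w ^ 2 :=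
          div_le_div_of_nonneg_left (sq_nonneg ε) (by positivity) hsq
      _ ≤ 2 * ε ^ 2 / w ^ 2 := by gcongr; nlinarith [sq_nonneg ε]
  calc exp (-2 * ε ^ 2 / w ^ 2) ≤ exp (-ε ^ 2 / (4 * δ ^ 2)) := exp_le_exp.2 hexponent
    _ ≤ 2 * exp (-ε ^ 2 / (4 * δ ^ 2)) := by linarith [exp_pos (-ε ^ 2 / (4 * δ ^ 2))]

/-- Theorem 1 (case λ < λ̄): the minimum-distance rule correctly de-anonymizes
`u` from `{u′, v}` with probability at least `1 - 2 exp(-(λ - λ̄)²/(4δ²))`;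
equivalently `P(X ≥ Y) ≤ 2 exp(-(λ - λ̄)²/(4δ²))`. -/
theorem theorem1_case_lt
    {Ω : Type*} [MeasurableSpace Ω] (P : Measure Ω) [IsProbabilityMeasure P]
    (X Y : Ω → ℝ) (hXm : Measurable X) (hYm : Measurable Y)
    (θl θu θbl θbu lam lamb θ θb δ : ℝ)
    (hXr : ∀ ω, X ω ∈ Set.Icc θl θu)
    (hYr : ∀ ω, Y ω ∈ Set.Icc θbl θbu)
    (hlam : lam = ∫ ω, X ω ∂P)
    (hlamb : lamb = ∫ ω, Y ω ∂P)
    (hθ : θ = θu - θl) (hθb : θb = θbu - θbl) (hδ : δ = max θ θb)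
    (hθpos : 0 < θ) (hθbpos : 0 < θb)
    (hlt : lam < lamb) :
    1 - 2 * Real.exp (-(lam - lamb) ^ 2 / (4 * δ ^ 2)) ≤
        (P {ω | X ω < Y ω}).toReal ∧
      (P {ω | Y ω ≤ X ω}).toReal ≤
        2 * Real.exp (-(lam - lamb) ^ 2 / (4 * δ ^ 2)) := by
  have htail : P.real {ω | Y ω ≤ X ω} ≤ 2 * exp (-(lam - lamb) ^ 2 / (4 * δ ^ 2)) := by
    have hoeffding := measureReal_le_le_exp_of_mem_Icc hXm.aemeasurable hYm.aemeasurable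
      (.of_forall hXr) (.of_forall hYr) (hlam ▸ hlamb ▸ hlt.le)
    rw [← hlam, ← hlamb, ← hθ, ← hθb, ← neg_sub lam lamb, neg_sq] at hoeffding
    exact hoeffding.trans <| exp_neg_two_mul_sq_div_sq_le (by linarith)
      (by linarith [hδ ▸ le_max_left θ θb, hδ ▸ le_max_right θ θb])
  have hsucc : {ω | X ω < Y ω} = {ω | Y ω ≤ X ω}ᶜ := by
    ext ω
    simp [not_le]
  refine ⟨?_, htail⟩
  rw [← measureReal_def, hsucc, probReal_compl_eq_one_sub (measurableSet_le hYm hXm)]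
  linarith
end

section
/- Theorem 1 (case λ > λ̄): If λ > λ̄, then the probability that the maximum-distance rule correctly de-anonymizes u from the pair {u′, v} satisfies P(X > Y) ≥ 1 − 2·exp(−(λ − λ̄)²/(4δ²)); equivalently, P(X ≤ Y) ≤ 2·exp(−(λ − λ̄)²/(4δ²)). -/
/-!
The event `X ≤ Y` is the event that the bounded variable `Y - X`, of mean `λ̄ - λ < 0`, exceeds
its mean by `λ - λ̄`. Hoeffding's lemma needs no independence of `X` and `Y`: it applies to `Y - X`
directly, which ranges over an interval of length `θ + θ̄ ≤ 2δ`, and the Chernoff bound gives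
`P(X ≤ Y) ≤ exp(-(λ - λ̄)² / (2δ²))`, stronger than the claimed bound.
-/

open MeasureTheory ProbabilityTheory Real Set

section Hoeffding

variable {Ω : Type*} [MeasurableSpace Ω] {μ : Measure Ω} [IsProbabilityMeasure μ]

theorem measureReal_sub_integral_ge_le_of_mem_Icc {Z : Ω → ℝ} {a b ε : ℝ}
    (hZm : AEMeasurable Z μ) (hZ : ∀ᵐ ω ∂μ, Z ω ∈ Icc a b) (hε : 0 ≤ ε) :
    μ.real {ω | ε ≤ Z ω - μ[Z]} ≤ exp (-2 * ε ^ 2 / (b - a) ^ 2) := by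
  refine ((hasSubgaussianMGF_of_mem_Icc hZm hZ).measure_ge_le hε).trans_eq ?_
  push_cast
  rw [Real.norm_eq_abs, div_pow, sq_abs,
    show (2 : ℝ) * ((b - a) ^ 2 / 2 ^ 2) = (b - a) ^ 2 / 2 by ring, div_div_eq_mul_div]
  ring_nf

theorem measureReal_setOf_le_le_of_mem_Icc {X Y : Ω → ℝ} {a b a' b' : ℝ}
    (hXm : AEMeasurable X μ) (hYm : AEMeasurable Y μ)
    (hX : ∀ᵐ ω ∂μ, X ω ∈ Icc a b) (hY : ∀ᵐ ω ∂μ, Y ω ∈ Icc a' b')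
    (hmean : μ[Y] ≤ μ[X]) :
    μ.real {ω | X ω ≤ Y ω} ≤
      exp (-2 * (μ[X] - μ[Y]) ^ 2 / ((b - a) + (b' - a')) ^ 2) := by
  have hYX : ∀ᵐ ω ∂μ, (Y - X) ω ∈ Icc (a' - b) (b' - a) := by
    filter_upwards [hX, hY] with ω hXω hYω
    exact ⟨by simp only [Pi.sub_apply]; linarith [hXω.2, hYω.1],
      by simp only [Pi.sub_apply]; linarith [hXω.1, hYω.2]⟩
  have hint : μ[Y - X] = μ[Y] - μ[X] :=
    integral_sub (Integrable.of_mem_Icc a' b' hYm hY) (Integrable.of_mem_Icc a b hXm hX)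
  have htail :=
    measureReal_sub_integral_ge_le_of_mem_Icc (hYm.sub hXm) hYX (sub_nonneg.2 hmean)
  rw [hint] at htail
  convert htail using 3
  · ext ω
    simp only [Pi.sub_apply]
    constructor <;> intro h <;> linarith
  · ring

end Hoeffding

theorem exp_neg_two_mul_sq_div_add_sq_le {ε θ θb δ : ℝ} (hθ : 0 < θ) (hθb : 0 < θb)
    (hθδ : θ ≤ δ) (hθbδ : θb ≤ δ) :
    exp (-2 * ε ^ 2 / (θ + θb) ^ 2) ≤ exp (-ε ^ 2 / (4 * δ ^ 2)) := by
  rw [exp_le_exp, neg_mul, neg_div, neg_div, neg_le_neg_iff]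
  calc ε ^ 2 / (4 * δ ^ 2) ≤ ε ^ 2 / (θ + θb) ^ 2 := by
        gcongr
        nlinarith
    _ ≤ 2 * ε ^ 2 / (θ + θb) ^ 2 := by gcongr; nlinarith [sq_nonneg ε]

/-- Theorem 1 (case λ > λ̄): the maximum-distance rule correctly de-anonymizes
`u` from `{u′, v}` with probability at least `1 - 2 exp(-(λ - λ̄)²/(4δ²))`;
equivalently `P(X ≤ Y) ≤ 2 exp(-(λ - λ̄)²/(4δ²))`. -/
theorem theorem1_case_gt
    {Ω : Type*} [MeasurableSpace Ω] (P : Measure Ω) [IsProbabilityMeasure P]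
    (X Y : Ω → ℝ) (hXm : Measurable X) (hYm : Measurable Y)
    (θl θu θbl θbu lam lamb θ θb δ : ℝ)
    (hXr : ∀ ω, X ω ∈ Set.Icc θl θu)
    (hYr : ∀ ω, Y ω ∈ Set.Icc θbl θbu)
    (hlam : lam = ∫ ω, X ω ∂P)
    (hlamb : lamb = ∫ ω, Y ω ∂P)
    (hθ : θ = θu - θl) (hθb : θb = θbu - θbl) (hδ : δ = max θ θb)
    (hθpos : 0 < θ) (hθbpos : 0 < θb)
    (hgt : lamb < lam) :
    1 - 2 * Real.exp (-(lam - lamb) ^ 2 / (4 * δ ^ 2)) ≤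
        (P {ω | Y ω < X ω}).toReal ∧
      (P {ω | X ω ≤ Y ω}).toReal ≤
        2 * Real.exp (-(lam - lamb) ^ 2 / (4 * δ ^ 2)) := by
  have hfail : P.real {ω | X ω ≤ Y ω} ≤ exp (-(lam - lamb) ^ 2 / (4 * δ ^ 2)) := by
    subst hlam hlamb hθ hθb
    refine (measureReal_setOf_le_le_of_mem_Icc hXm.aemeasurable hYm.aemeasurable
      (.of_forall hXr) (.of_forall hYr) hgt.le).trans ?_
    exact exp_neg_two_mul_sq_div_add_sq_le hθpos hθbpos (hδ ▸ le_max_left _ _)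
      (hδ ▸ le_max_right _ _)
  have hsucc : P.real {ω | Y ω < X ω} = 1 - P.real {ω | X ω ≤ Y ω} := by
    simpa only [compl_ofPred, not_le] using
      probReal_compl_eq_one_sub (μ := P) (measurableSet_le hXm hYm)
  rw [← measureReal_def, ← measureReal_def, hsucc]
  constructor <;> linarith [exp_pos (-(lam - lamb) ^ 2 / (4 * δ ^ 2))]
end

section
/- Theorem 3(i) (Top-K re-identifiability of one user): Let n₂ ≥ 2 and 1 ≤ K < n₂ be integers, and let {Y_v}_{v ∈ V} be a family indexed by a finite set V of size n₂ − 1 (the wrong candidates), each with values in [θ̄l, θ̄u] and mean λ̄. If λ < λ̄, then P(#{v ∈ V : Y_v ≤ X} ≤ K − 1) ≥ 1 − exp(ln(2·(n₂ − K)) − (λ − λ̄)²/(4δ²)) = 1 − 2·(n₂ − K)·exp(−(λ − λ̄)²/(4δ²)); on this event X is among the K smallest of the n₂ values {X} ∪ {Y_v : v ∈ V}, i.e., the true mapping u′ belongs to the Top-K candidate set returned by the rule that selects the K candidates with smallest distance. Symmetrically, if λ > λ̄, then P(#{v ∈ V : Y_v ≥ X} ≤ K − 1) ≥ 1 − 2·(n₂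 − K)·exp(−(λ − λ̄)²/(4δ²)), and on this event u′ belongs to the Top-K candidate set returned by the rule selecting the K candidates with largest distance. -/
open MeasureTheory

lemma myInt {Ω : Type*} [MeasurableSpace Ω] (P : Measure Ω) [IsProbabilityMeasure P]
    (X : Ω → ℝ) (hXm : Measurable X) (a b : ℝ) (hX : ∀ ω, X ω ∈ Set.Icc a b) :
    Integrable X P := by
  refine (integrable_const (max |a| |b|)).mono' hXm.aestronglyMeasurable (ae_of_all _ fun ω => ?_)
  have h1 := (hX ω).1; have h2 := (hX ω).2
  have := le_abs_self b; have := neg_abs_le a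
  rw [Real.norm_eq_abs, abs_le]
  constructor
  · have : -max |a| |b| ≤ -|a| := by simp [le_max_left]
    linarith
  · have := le_max_right |a| |b|; linarith

lemma prob_le_exp {Ω : Type*} [MeasurableSpace Ω] (P : Measure Ω) [IsProbabilityMeasure P]
    (X Y : Ω → ℝ) (hXm : Measurable X) (hYm : Measurable Y)
    (a b c d lam lamb δ : ℝ)
    (hX : ∀ ω, X ω ∈ Set.Icc a b) (hY : ∀ ω, Y ω ∈ Set.Icc c d)
    (hlam : lam = ∫ ω, X ω ∂P) (hlamb : lamb = ∫ ω, Y ω ∂P)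
    (hba : b - a ≤ δ) (hdc : d - c ≤ δ) (hδ : 0 < δ) (h : lam < lamb) :
    (P {ω | Y ω ≤ X ω}).toReal ≤ Real.exp (-(lamb - lam) ^ 2 / (4 * δ ^ 2)) := by
  by_cases hcb : b < c
  · have : {ω | Y ω ≤ X ω} = ∅ := by
      ext ω; simp only [Set.mem_setOf_eq, Set.mem_empty_iff_false, iff_false, not_le]
      exact lt_of_le_of_lt (hX ω).2 (lt_of_lt_of_le hcb (hY ω).1)
    rw [this]
    simp [Real.exp_nonneg]
  · push_neg at hcb
    have hXi := myInt P X hXm a b hX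
    have hYi := myInt P Y hYm c d hY
    set B : Set Ω := {ω | Y ω ≤ X ω} with hBdef
    have hB : MeasurableSet B := measurableSet_le hYm hXm
    set m : ℝ := lamb - lam with hm
    have hm0 : 0 < m := by simp [hm]; linarith
    -- lamb ≤ d, a ≤ lam
    have hlambd : lamb ≤ d := by
      rw [hlamb]
      calc ∫ ω, Y ω ∂P ≤ ∫ _, d ∂P := integral_mono hYi (integrable_const d) fun ω => (hY ω).2
        _ = d := by simp
    have hlama : a ≤ lam := by
      rw [hlam]
      calc a = ∫ _, a ∂P := by simp
        _ ≤ ∫ ω, X ω ∂P := integral_mono (integrable_const a) hXi fun ω => (hX ω).1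
    have hda : d - a ≤ 2 * δ := by linarith
    -- m ≤ (2δ) * P(Bᶜ)
    have hsub : Integrable (fun ω => Y ω - X ω) P := hYi.sub hXi
    have key : m ≤ 2 * δ * (P Bᶜ).toReal := by
      have h1 : ∫ ω in B, (Y ω - X ω) ∂P ≤ 0 :=
        setIntegral_nonpos hB fun ω hω => sub_nonpos.2 hω
      have h2 : ∫ ω in Bᶜ, (Y ω - X ω) ∂P ≤ (2 * δ) * (P Bᶜ).toReal := by
        calc ∫ ω in Bᶜ, (Y ω - X ω) ∂P ≤ ∫ _ in Bᶜ, (2 * δ) ∂P := by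
              refine setIntegral_mono_on hsub.integrableOn (integrable_const _).integrableOn
                hB.compl fun ω _ => ?_
              have := (hY ω).2; have := (hX ω).1; linarith
          _ = (P Bᶜ).toReal • (2 * δ) := setIntegral_const _
          _ = (2 * δ) * (P Bᶜ).toReal := by rw [smul_eq_mul]; ring
      have h3 : ∫ ω, (Y ω - X ω) ∂P = m := by
        rw [integral_sub hYi hXi, hm, hlam, hlamb]
      have h4 := integral_add_compl hB hsub
      linarith
    have hPc : (P Bᶜ).toReal = 1 - (P B).toReal := by
      rw [prob_compl_eq_one_sub hB, ENNReal.toReal_sub_of_le prob_le_one ENNReal.one_ne_top]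
      simp
    set s : ℝ := m / (2 * δ) with hs
    have hs0 : 0 < s := div_pos hm0 (by linarith)
    have hs1 : s ≤ 1 := by
      rw [hs, div_le_one (by linarith)]
      have h5 : (P Bᶜ).toReal ≤ 1 := by
        rw [hPc]; have := ENNReal.toReal_nonneg (a := P B); linarith
      nlinarith
    have hPB : (P B).toReal ≤ 1 - s := by
      have h5 : s ≤ (P Bᶜ).toReal := by
        rw [hs, div_le_iff₀ (by linarith)]
        linarith [key]
      linarith [hPc ▸ h5]
    have e1 : (1 : ℝ) - s ≤ Real.exp (-s) := by
      have := Real.add_one_le_exp (-s); linarith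
    have e2 : Real.exp (-s) ≤ Real.exp (-s ^ 2) := by
      apply Real.exp_le_exp.2
      nlinarith
    have e3 : -s ^ 2 = -(lamb - lam) ^ 2 / (4 * δ ^ 2) := by
      rw [hs, hm]
      field_simp
      ring
    calc (P B).toReal ≤ 1 - s := hPB
      _ ≤ Real.exp (-s) := e1
      _ ≤ Real.exp (-s ^ 2) := e2
      _ = _ := by rw [e3]


lemma count_bound {Ω : Type*} [MeasurableSpace Ω] (P : Measure Ω) [IsProbabilityMeasure P]
    {V : Type*} [Fintype V] (B : V → Set Ω) (hB : ∀ v, MeasurableSet (B v))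
    (K : ℕ) (hK : 1 ≤ K) (p : ℝ) (hp0 : 0 ≤ p) (hp : ∀ v, (P (B v)).toReal ≤ p) :
    1 - (Fintype.card V : ℝ) * p / K ≤ (P {ω | {v | ω ∈ B v}.ncard ≤ K - 1}).toReal := by
  classical
  set g : Ω → ℕ := fun ω => (Finset.univ.filter (fun v => ω ∈ B v)).card with hg
  have hgm : Measurable g := by
    have : g = fun ω => ∑ v : V, (if ω ∈ B v then 1 else 0) := by
      ext ω; rw [hg]; exact Finset.card_filter _ _
    rw [this]
    exact Finset.measurable_sum _ fun v _ =>
      Measurable.ite (hB v) measurable_const measurable_const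
  have hncard : ∀ ω, {v | ω ∈ B v}.ncard = g ω := by
    intro ω
    rw [hg]
    simp [Set.ncard_eq_toFinset_card', Set.toFinset_setOf]
  set A : Set Ω := {ω | K ≤ g ω} with hA
  have hAm : MeasurableSet A := hgm measurableSet_Ici
  -- lintegral of g equals sum of measures
  have hlint : ∫⁻ ω, (g ω : ENNReal) ∂P = ∑ v : V, P (B v) := by
    have : (fun ω => (g ω : ENNReal)) =
        fun ω => ∑ v : V, (B v).indicator (1 : Ω → ENNReal) ω := by
      ext ω
      rw [hg]
      simp only [Finset.card_filter, Nat.cast_sum]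
      simp [Set.indicator_apply]
    rw [this, lintegral_finset_sum]
    · simp_rw [lintegral_indicator_one (hB _)]
    · exact fun v _ => (measurable_one).indicator (hB v)
  have hmarkov : (K : ENNReal) * P A ≤ ∑ v : V, P (B v) := by
    rw [← hlint]
    have : A = {ω | (K : ENNReal) ≤ (g ω : ENNReal)} := by
      ext ω; simp [hA, Nat.cast_le]
    rw [this]
    exact mul_meas_ge_le_lintegral₀
      ((measurable_from_top.comp hgm).aemeasurable) _
  -- to real
  have hPA : (P A).toReal * K ≤ (Fintype.card V : ℝ) * p := by
    have h1 : ((K : ENNReal) * P A).toReal ≤ (∑ v : V, P (B v)).toReal := by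
      apply ENNReal.toReal_mono _ hmarkov
      exact ENNReal.sum_ne_top.2 fun v _ => measure_ne_top _ _
    rw [ENNReal.toReal_mul, ENNReal.toReal_natCast] at h1
    have h2 : (∑ v : V, P (B v)).toReal = ∑ v : V, (P (B v)).toReal := by
      rw [ENNReal.toReal_sum fun v _ => measure_ne_top _ _]
    have h3 : ∑ v : V, (P (B v)).toReal ≤ (Fintype.card V : ℝ) * p := by
      calc ∑ v : V, (P (B v)).toReal ≤ ∑ _v : V, p := Finset.sum_le_sum fun v _ => hp v
        _ = (Fintype.card V : ℝ) * p := by simp [mul_comm]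
    rw [h2] at h1; linarith
  have hEc : {ω | {v | ω ∈ B v}.ncard ≤ K - 1} = Aᶜ := by
    ext ω
    simp only [Set.mem_setOf_eq, Set.mem_compl_iff, hA, hncard ω]
    omega
  rw [hEc]
  have : (P Aᶜ).toReal = 1 - (P A).toReal := by
    rw [prob_compl_eq_one_sub hAm, ENNReal.toReal_sub_of_le prob_le_one ENNReal.one_ne_top]
    simp
  rw [this]
  have hKpos : (0:ℝ) < K := by exact_mod_cast hK
  have : (P A).toReal ≤ (Fintype.card V : ℝ) * p / K := by
    rw [le_div_iff₀ hKpos]; linarith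
  linarith


/-- Theorem 3(i) (Top-K re-identifiability of one user): with `n₂ - 1` wrong
candidates `Y_v`, the event that at most `K - 1` wrong candidates have distance
`≤ X` (so that the true mapping is in the Top-K candidate set of the
smallest-distance rule, resp. `≥ X` for the largest-distance rule) has
probability at least `1 - 2 (n₂ - K) exp(-(λ - λ̄)²/(4δ²))`. -/
theorem theorem3_topK
    {Ω : Type*} [MeasurableSpace Ω] (P : Measure Ω) [IsProbabilityMeasure P]
    {V : Type*} [Fintype V]
    (n₂ K : ℕ) (hn₂ : 2 ≤ n₂) (hK : 1 ≤ K) (hKn₂ : K < n₂)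
    (hV : Fintype.card V = n₂ - 1)
    (X : Ω → ℝ) (Y : V → Ω → ℝ)
    (hXm : Measurable X) (hYm : ∀ v, Measurable (Y v))
    (θl θu θbl θbu lam lamb θ θb δ : ℝ)
    (hXr : ∀ ω, X ω ∈ Set.Icc θl θu)
    (hYr : ∀ v ω, Y v ω ∈ Set.Icc θbl θbu)
    (hlam : lam = ∫ ω, X ω ∂P)
    (hlamb : ∀ v, lamb = ∫ ω, Y v ω ∂P)
    (hθ : θ = θu - θl) (hθb : θb = θbu - θbl) (hδ : δ = max θ θb)
    (hθpos : 0 < θ) (hθbpos : 0 < θb) :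
    (lam < lamb →
      1 - 2 * ((n₂ : ℝ) - K) * Real.exp (-(lam - lamb) ^ 2 / (4 * δ ^ 2)) ≤
        (P {ω | {v : V | Y v ω ≤ X ω}.ncard ≤ K - 1}).toReal) ∧
    (lamb < lam →
      1 - 2 * ((n₂ : ℝ) - K) * Real.exp (-(lam - lamb) ^ 2 / (4 * δ ^ 2)) ≤
        (P {ω | {v : V | X ω ≤ Y v ω}.ncard ≤ K - 1}).toReal) := by
  have hδpos : 0 < δ := by rw [hδ]; exact lt_of_lt_of_le hθpos (le_max_left _ _)
  have hθδ : θu - θl ≤ δ := by rw [hδ, ← hθ]; exact le_max_left _ _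
  have hθbδ : θbu - θbl ≤ δ := by rw [hδ, ← hθb]; exact le_max_right _ _
  set p : ℝ := Real.exp (-(lam - lamb) ^ 2 / (4 * δ ^ 2)) with hp
  have hp0 : 0 ≤ p := Real.exp_nonneg _
  have hKpos : (0:ℝ) < K := by exact_mod_cast hK
  have hcast : ((Fintype.card V : ℕ) : ℝ) = (n₂ : ℝ) - 1 := by
    rw [hV, Nat.cast_sub (by omega)]; simp
  have hfrac : ((Fintype.card V : ℕ) : ℝ) * p / K ≤ 2 * ((n₂ : ℝ) - K) * p := by
    rw [hcast, div_le_iff₀ hKpos]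
    have h1 : (1:ℝ) ≤ (K:ℝ) := by exact_mod_cast hK
    have h2 : (K:ℝ) + 1 ≤ (n₂:ℝ) := by exact_mod_cast hKn₂
    nlinarith [mul_nonneg (mul_nonneg (sub_nonneg.2 h1) (by linarith : (0:ℝ) ≤ (n₂:ℝ) - (K:ℝ) - 1)) hp0]
  constructor
  · intro h
    have hbound : ∀ v, (P {ω | Y v ω ≤ X ω}).toReal ≤ p := by
      intro v
      have := prob_le_exp P X (Y v) hXm (hYm v) θl θu θbl θbu lam lamb δ
        hXr (hYr v) hlam (hlamb v) hθδ hθbδ hδpos h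
      rw [hp, show (-(lam - lamb) ^ 2 : ℝ) = -(lamb - lam) ^ 2 by ring]
      exact this
    have := count_bound P (fun v => {ω | Y v ω ≤ X ω})
      (fun v => measurableSet_le (hYm v) hXm) K hK p hp0 hbound
    calc 1 - 2 * ((n₂ : ℝ) - K) * p ≤ 1 - ((Fintype.card V : ℕ) : ℝ) * p / K := by linarith
      _ ≤ _ := this
  · intro h
    have hbound : ∀ v, (P {ω | X ω ≤ Y v ω}).toReal ≤ p := by
      intro v
      have := prob_le_exp P (Y v) X (hYm v) hXm θbl θbu θl θu lamb lam δ
        (hYr v) hXr (hlamb v) hlam hθbδ hθδ hδpos h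
      rw [hp]
      exact this
    have := count_bound P (fun v => {ω | X ω ≤ Y v ω})
      (fun v => measurableSet_le hXm (hYm v)) K hK p hp0 hbound
    calc 1 - 2 * ((n₂ : ℝ) - K) * p ≤ 1 - ((Fintype.card V : ℕ) : ℝ) * p / K := by linarith
      _ ≤ _ := this
end

section
/- Theorem 3(ii) (quantitative form): In the setting of Theorem 3(i), let n ≥ 1 be an integer. If λ ≠ λ̄ and |λ − λ̄|/(2δ) ≥ √(ln(2·(n₂ − K)) + 2·ln n), then the probability of a correct Top-K de-anonymization of u is at least 1 − 1/n²; that is, P(#{v ∈ V : Y_v ≤ X} ≤ K − 1) ≥ 1 − 1/n² when λ < λ̄, and P(#{v ∈ V : Y_v ≥ X} ≤ K − 1) ≥ 1 − 1/n² when λ > λ̄. -/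
open MeasureTheory

/-!
Put the threshold `t = (λ + λ̄)/2` and `s = |λ - λ̄|/2`. If the true mapping is missed, then
either `X ≥ t` or at least `K` of the `Y v` lie below `t`. Hoeffding's lemma bounds each of
these single-variable tails by `exp (-2 s² / θ²)` (resp. with `θ̄`), hence by
`ε := exp (-(s/δ)²)`, and Markov's inequality for the number of `v` with `Y v ≤ t` bounds the
second event by `(n₂ - 1) ε / K`; no independence is needed. The gap hypothesis says
`ε ≤ 1 / (2 (n₂ - K) n²)`, and `1 + (n₂ - 1)/K ≤ 2 (n₂ - K)`. The case `λ > λ̄` follows by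
negating all variables.
-/

open ProbabilityTheory Real Set

lemma one_add_div_le_two_mul_sub {K N : ℝ} (hK : 1 ≤ K) (hKN : K ≤ N) :
    1 + N / K ≤ 2 * (N + 1 - K) := by
  have : N / K ≤ N + 1 - K := by
    rw [div_le_iff₀ (by linarith)]
    nlinarith
  linarith

lemma exp_neg_two_mul_sq_div_sq_le_inv {m s c δ : ℝ} {n : ℕ} (hm : 0 < m) (hn : 1 ≤ n)
    (hc : 0 < c) (hcδ : c ≤ δ) (hgap : √(log m + 2 * log n) ≤ s / δ) :
    exp (-2 * s ^ 2 / c ^ 2) ≤ (m * (n : ℝ) ^ 2)⁻¹ := by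
  have hn' : (1 : ℝ) ≤ n := by exact_mod_cast hn
  have hlog : (2 : ℝ) * log n = log ((n : ℝ) ^ 2) := by rw [log_pow]; push_cast; ring
  rw [← exp_log (by positivity : 0 < m * (n : ℝ) ^ 2), ← exp_neg, exp_le_exp,
    log_mul hm.ne' (by positivity), ← hlog]
  have hL : log m + 2 * log n ≤ (s / δ) ^ 2 :=
    (sqrt_le_left ((sqrt_nonneg _).trans hgap)).1 hgap
  have hsc : (s / δ) ^ 2 ≤ 2 * s ^ 2 / c ^ 2 := calc
    (s / δ) ^ 2 = s ^ 2 / δ ^ 2 := div_pow s δ 2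
    _ ≤ s ^ 2 / c ^ 2 := by gcongr
    _ ≤ 2 * s ^ 2 / c ^ 2 := by gcongr; linarith [sq_nonneg s]
  rw [neg_mul, neg_div, neg_le_neg_iff]
  linarith

section

variable {Ω V : Type*} {mΩ : MeasurableSpace Ω} {μ : Measure Ω}

section Hoeffding

variable [IsProbabilityMeasure μ] {X : Ω → ℝ} {a b s : ℝ}

lemma measureReal_integral_add_le_le_of_mem_Icc (hm : AEMeasurable X μ)
    (hb : ∀ᵐ ω ∂μ, X ω ∈ Icc a b) (hs : 0 ≤ s) :
    μ.real {ω | μ[X] + s ≤ X ω} ≤ exp (-2 * s ^ 2 / (b - a) ^ 2) := by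
  have h := (hasSubgaussianMGF_of_mem_Icc hm hb).measure_ge_le hs
  have hset : {ω | s ≤ X ω - μ[X]} = {ω | μ[X] + s ≤ X ω} := by
    ext ω; simp only [mem_ofPred_eq]; constructor <;> intro h <;> linarith
  have hexp :
      -s ^ 2 / (2 * (((‖b - a‖₊ / 2) ^ 2 : NNReal) : ℝ)) = -2 * s ^ 2 / (b - a) ^ 2 := by
    push_cast
    rw [Real.norm_eq_abs, div_pow, sq_abs]
    generalize (b - a) ^ 2 = c
    ring
  rwa [hset, hexp] at h

lemma measureReal_le_integral_sub_le_of_mem_Icc (hm : AEMeasurable X μ)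
    (hb : ∀ᵐ ω ∂μ, X ω ∈ Icc a b) (hs : 0 ≤ s) :
    μ.real {ω | X ω ≤ μ[X] - s} ≤ exp (-2 * s ^ 2 / (b - a) ^ 2) := by
  have h := measureReal_integral_add_le_le_of_mem_Icc (X := fun ω ↦ -X ω) hm.neg
    (hb.mono fun ω hω ↦ ⟨neg_le_neg hω.2, neg_le_neg hω.1⟩) hs
  have hset : {ω | -μ[X] + s ≤ -X ω} = {ω | X ω ≤ μ[X] - s} := by
    ext ω; simp only [mem_ofPred_eq]; constructor <;> intro h <;> linarith
  rwa [integral_neg, hset, neg_sub_neg] at h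

end Hoeffding

variable [Fintype V]

lemma natCast_mul_measureReal_le_ncard_le_sum [IsFiniteMeasure μ] {A : V → Set Ω}
    (hA : ∀ v, MeasurableSet (A v)) (K : ℕ) :
    K * μ.real {ω | K ≤ {v | ω ∈ A v}.ncard} ≤ ∑ v, μ.real (A v) := by
  classical
  have hcount (ω : Ω) : ({v | ω ∈ A v}.ncard : ℝ) = ∑ v, (A v).indicator (1 : Ω → ℝ) ω := by
    simp [Set.indicator_apply, Finset.sum_boole, Set.ncard_eq_toFinset_card']
  have hint (v : V) : Integrable ((A v).indicator (1 : Ω → ℝ)) μ :=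
    (integrable_const (1 : ℝ)).indicator (hA v)
  calc (K : ℝ) * μ.real {ω | K ≤ {v | ω ∈ A v}.ncard}
      = K * μ.real {ω | (K : ℝ) ≤ ∑ v, (A v).indicator 1 ω} := by
        simp only [← hcount, Nat.cast_le]
    _ ≤ ∫ ω, ∑ v, (A v).indicator 1 ω ∂μ :=
        mul_meas_ge_le_integral_of_nonneg
          (ae_of_all _ fun ω ↦ Finset.sum_nonneg fun v _ ↦ indicator_nonneg (by simp) ω)
          (integrable_finsetSum _ fun v _ ↦ hint v) _
    _ = ∑ v, μ.real (A v) := by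
        rw [integral_finsetSum _ fun v _ ↦ hint v]
        simp only [integral_indicator_one (hA _)]

lemma one_sub_le_measureReal_ncard_le_sub_one [IsProbabilityMeasure μ] {X : Ω → ℝ}
    {Y : V → Ω → ℝ} (hYm : ∀ v, Measurable (Y v)) {K : ℕ} (hK : 1 ≤ K) (t : ℝ) :
    1 - (μ.real {ω | t ≤ X ω} + (∑ v, μ.real {ω | Y v ω ≤ t}) / K) ≤
      μ.real {ω | {v | Y v ω ≤ X ω}.ncard ≤ K - 1} := by
  set B := {ω | K ≤ {v | Y v ω ≤ t}.ncard}
  have hcover : univ ⊆ {ω | {v | Y v ω ≤ X ω}.ncard ≤ K - 1} ∪ {ω | t ≤ X ω} ∪ B := by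
    intro ω _
    by_contra! h
    simp only [mem_union, mem_ofPred_eq, not_or, not_le, B] at h
    obtain ⟨⟨hgood, hX⟩, hB⟩ := h
    have : {v | Y v ω ≤ X ω}.ncard ≤ {v | Y v ω ≤ t}.ncard :=
      ncard_le_ncard (fun v (hv : Y v ω ≤ X ω) ↦ hv.trans hX.le) (toFinite _)
    omega
  have hB : μ.real B ≤ (∑ v, μ.real {ω | Y v ω ≤ t}) / K := by
    rw [le_div_iff₀ (by exact_mod_cast hK), mul_comm]
    exact natCast_mul_measureReal_le_ncard_le_sum
      (fun v ↦ measurableSet_le (hYm v) measurable_const) K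
  have hunion := (measureReal_mono (μ := μ) hcover).trans
    ((measureReal_union_le _ _).trans (add_le_add_left (measureReal_union_le _ _) _))
  rw [probReal_univ] at hunion
  linarith

lemma one_sub_inv_sq_le_measureReal_ncard_le_sub_one [IsProbabilityMeasure μ] {X : Ω → ℝ}
    {Y : V → Ω → ℝ} (hXm : AEMeasurable X μ) (hYm : ∀ v, Measurable (Y v))
    {a b a' b' lam lamb δ : ℝ}
    (hXr : ∀ᵐ ω ∂μ, X ω ∈ Icc a b) (hYr : ∀ v, ∀ᵐ ω ∂μ, Y v ω ∈ Icc a' b')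
    (hlam : lam = μ[X]) (hlamb : ∀ v, lamb = μ[Y v])
    (hab : 0 < b - a) (hab' : 0 < b' - a') (hδ : b - a ≤ δ) (hδ' : b' - a' ≤ δ)
    {K n : ℕ} (hK : 1 ≤ K) (hKV : K ≤ Fintype.card V) (hn : 1 ≤ n) (hlt : lam < lamb)
    (hgap : √(log (2 * ((Fintype.card V : ℝ) + 1 - K)) + 2 * log n) ≤
      (lamb - lam) / (2 * δ)) :
    1 - 1 / (n : ℝ) ^ 2 ≤ μ.real {ω | {v | Y v ω ≤ X ω}.ncard ≤ K - 1} := by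
  set N : ℝ := (Fintype.card V : ℝ)
  set s := (lamb - lam) / 2
  set ε := (2 * (N + 1 - K) * (n : ℝ) ^ 2)⁻¹
  have hK' : (1 : ℝ) ≤ K := by exact_mod_cast hK
  have hKN : (K : ℝ) ≤ N := by simp only [N]; exact_mod_cast hKV
  have hs : 0 < s := by simp only [s]; linarith
  have hm : 0 < N + 1 - K := by linarith
  have htail (c : ℝ) (hc : 0 < c) (hcδ : c ≤ δ) : exp (-2 * s ^ 2 / c ^ 2) ≤ ε :=
    exp_neg_two_mul_sq_div_sq_le_inv (by positivity) hn hc hcδ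
      (by convert hgap using 1; simp only [s]; ring)
  have hX : μ.real {ω | μ[X] + s ≤ X ω} ≤ ε :=
    (measureReal_integral_add_le_le_of_mem_Icc hXm hXr hs.le).trans (htail _ hab hδ)
  have hY (v : V) : μ.real {ω | Y v ω ≤ μ[X] + s} ≤ ε := by
    have hmid : μ[X] + s = μ[Y v] - s := by simp only [s]; rw [← hlam, ← hlamb v]; ring
    rw [hmid]
    exact (measureReal_le_integral_sub_le_of_mem_Icc (hYm v).aemeasurable (hYr v) hs.le).trans
      (htail _ hab' hδ')
  have hsum : ∑ v, μ.real {ω | Y v ω ≤ μ[X] + s} ≤ N * ε := by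
    calc ∑ v, μ.real {ω | Y v ω ≤ μ[X] + s} ≤ ∑ _v : V, ε := Finset.sum_le_sum fun v _ ↦ hY v
      _ = N * ε := by simp [N]
  have hεn : ε * (2 * (N + 1 - K)) = 1 / (n : ℝ) ^ 2 := by
    simp only [ε]; field_simp
  calc 1 - 1 / (n : ℝ) ^ 2 ≤ 1 - ε * (1 + N / K) := by
        rw [← hεn]
        gcongr
        exact one_add_div_le_two_mul_sub hK' hKN
    _ ≤ 1 - (μ.real {ω | μ[X] + s ≤ X ω} + (∑ v, μ.real {ω | Y v ω ≤ μ[X] + s}) / K) := by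
        rw [mul_one_add, ← mul_div_assoc, mul_comm ε N]
        gcongr
    _ ≤ _ := one_sub_le_measureReal_ncard_le_sub_one hYm hK _

end

theorem theorem3_topK_quantitative_general
    {Ω : Type*} [MeasurableSpace Ω] (P : Measure Ω) [IsProbabilityMeasure P]
    {V : Type*} [Fintype V]
    (n₂ K : ℕ) (hK : 1 ≤ K) (hKn₂ : K < n₂)
    (hV : Fintype.card V = n₂ - 1)
    (X : Ω → ℝ) (Y : V → Ω → ℝ)
    (hXm : Measurable X) (hYm : ∀ v, Measurable (Y v))
    (θl θu θbl θbu lam lamb θ θb δ : ℝ)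
    (hXr : ∀ ω, X ω ∈ Set.Icc θl θu)
    (hYr : ∀ v ω, Y v ω ∈ Set.Icc θbl θbu)
    (hlam : lam = ∫ ω, X ω ∂P)
    (hlamb : ∀ v, lamb = ∫ ω, Y v ω ∂P)
    (hθ : θ = θu - θl) (hθb : θb = θbu - θbl) (hδ : δ = max θ θb)
    (hθpos : 0 < θ) (hθbpos : 0 < θb)
    (n : ℕ) (hn : 1 ≤ n)
    (hgap : Real.sqrt (Real.log (2 * ((n₂ : ℝ) - K)) + 2 * Real.log n) ≤
      |lam - lamb| / (2 * δ)) :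
    (lam < lamb →
      1 - 1 / (n : ℝ) ^ 2 ≤
        (P {ω | {v : V | Y v ω ≤ X ω}.ncard ≤ K - 1}).toReal) ∧
    (lamb < lam →
      1 - 1 / (n : ℝ) ^ 2 ≤
        (P {ω | {v : V | X ω ≤ Y v ω}.ncard ≤ K - 1}).toReal) := by
  have hθδ : θ ≤ δ := hδ ▸ le_max_left _ _
  have hθbδ : θb ≤ δ := hδ ▸ le_max_right _ _
  have hKV : K ≤ Fintype.card V := by omega
  have hn₂ : (n₂ : ℝ) = Fintype.card V + 1 := by
    rw [hV, Nat.cast_sub (by omega), Nat.cast_one, sub_add_cancel]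
  rw [hn₂] at hgap
  refine ⟨fun hlt ↦ ?_, fun hlt ↦ ?_⟩
  · rw [abs_sub_comm, abs_of_pos (sub_pos.2 hlt)] at hgap
    exact one_sub_inv_sq_le_measureReal_ncard_le_sub_one hXm.aemeasurable hYm
      (ae_of_all _ hXr) (fun v ↦ ae_of_all _ (hYr v)) hlam hlamb (by linarith) (by linarith)
      (by linarith) (by linarith) hK hKV hn hlt hgap
  · rw [abs_of_pos (sub_pos.2 hlt)] at hgap
    have h := one_sub_inv_sq_le_measureReal_ncard_le_sub_one (μ := P) (X := fun ω ↦ -X ω)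
      (Y := fun v ω ↦ -Y v ω) (δ := δ) hXm.neg.aemeasurable (fun v ↦ (hYm v).neg)
      (ae_of_all _ fun ω ↦ ⟨neg_le_neg (hXr ω).2, neg_le_neg (hXr ω).1⟩)
      (fun v ↦ ae_of_all _ fun ω ↦ ⟨neg_le_neg (hYr v ω).2, neg_le_neg (hYr v ω).1⟩)
      (by rw [hlam, integral_neg]) (fun v ↦ by rw [hlamb v, integral_neg])
      (by linarith) (by linarith) (by linarith) (by linarith) hK hKV hn (neg_lt_neg hlt)
      (by rwa [neg_sub_neg])
    simpa only [neg_le_neg_iff, measureReal_def] using h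

/-- Theorem 3(ii) (quantitative form): in the setting of Theorem 3(i), if
`λ ≠ λ̄` and `|λ - λ̄|/(2δ) ≥ √(ln(2(n₂ - K)) + 2 ln n)`, then the
probability of a correct Top-K de-anonymization of `u` is at least
`1 - 1/n²`. -/
theorem theorem3_topK_quantitative
    {Ω : Type*} [MeasurableSpace Ω] (P : Measure Ω) [IsProbabilityMeasure P]
    {V : Type*} [Fintype V]
    (n₂ K : ℕ) (hn₂ : 2 ≤ n₂) (hK : 1 ≤ K) (hKn₂ : K < n₂)
    (hV : Fintype.card V = n₂ - 1)
    (X : Ω → ℝ) (Y : V → Ω → ℝ)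
    (hXm : Measurable X) (hYm : ∀ v, Measurable (Y v))
    (θl θu θbl θbu lam lamb θ θb δ : ℝ)
    (hXr : ∀ ω, X ω ∈ Set.Icc θl θu)
    (hYr : ∀ v ω, Y v ω ∈ Set.Icc θbl θbu)
    (hlam : lam = ∫ ω, X ω ∂P)
    (hlamb : ∀ v, lamb = ∫ ω, Y v ω ∂P)
    (hθ : θ = θu - θl) (hθb : θb = θbu - θbl) (hδ : δ = max θ θb)
    (hθpos : 0 < θ) (hθbpos : 0 < θb)
    (n : ℕ) (hn : 1 ≤ n)
    (hne : lam ≠ lamb)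
    (hgap : Real.sqrt (Real.log (2 * ((n₂ : ℝ) - K)) + 2 * Real.log n) ≤
      |lam - lamb| / (2 * δ)) :
    (lam < lamb →
      1 - 1 / (n : ℝ) ^ 2 ≤
        (P {ω | {v : V | Y v ω ≤ X ω}.ncard ≤ K - 1}).toReal) ∧
    (lamb < lam →
      1 - 1 / (n : ℝ) ^ 2 ≤
        (P {ω | {v : V | X ω ≤ Y v ω}.ncard ≤ K - 1}).toReal) :=
  theorem3_topK_quantitative_general P n₂ K hK hKn₂ hV X Y hXm hYm θl θu θbl θbu lam lamb θ θb δ hXr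
    hYr hlam hlamb hθ hθb hδ hθpos hθbpos n hn hgap
end
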